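/- arXiv:2302.11202 — 8 statements merged into one kernel-verified Lean document; each statement's English description precedes it below -/
import Mathlib

section
/- Let Λ be a left hereditary ring and M a left Λ-module. Then M is stable if and only if Hom_Λ(M, P) = 0 for every projective left Λ-module P. -/
/-!
A projective direct summand `p` of `M` is the image of the projection `M → p`, so if every map
from `M` to a projective module vanishes, `M` is stable. Conversely, a nonzero map from `M` to a
projective module, followed by a suitable coordinate functional, gives a nonzero `φ : M → Λ`.
Its image is a left ideal, hence projective since `Λ` is hereditary, so `φ` onto its image splits
and `M` acquires a nonzero projective direct summand isomorphic to `im φ`.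
-/

universe u

def IsStableModule (Λ : Type u) [Ring Λ] (M : Type u) [AddCommGroup M] [Module Λ M] : Prop :=
  ∀ p : Submodule Λ M, Module.Projective Λ p → (∃ q, IsCompl p q) → p = ⊥

open LinearMap Module

theorem LinearMap.exists_dual_comp_ne_zero {R M P : Type*} [Semiring R] [AddCommMonoid M]
    [Module R M] [AddCommMonoid P] [Module R P] [Projective R P] {f : M →ₗ[R] P} (hf : f ≠ 0) :
    ∃ g : Dual R P, g ∘ₗ f ≠ 0 := by
  obtain ⟨x, hx⟩ := not_forall.mp fun h ↦ hf (LinearMap.ext h)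
  obtain ⟨g, hg⟩ := Projective.exists_dual_ne_zero R hx
  exact ⟨g, fun h ↦ hg (LinearMap.congr_fun h x)⟩

theorem LinearMap.isCompl_range_ker_of_comp_eq_id {R M N : Type*} [Ring R] [AddCommGroup M]
    [Module R M] [AddCommGroup N] [Module R N] {f : M →ₗ[R] N} {s : N →ₗ[R] M}
    (hfs : f ∘ₗ s = .id) : IsCompl (range s) (ker f) := by
  have hf : range f = ⊤ := range_eq_top_of_surjective f fun y ↦ ⟨s y, congr($hfs y)⟩
  have hs : ker s = ⊥ := ker_eq_bot_of_inverse hfs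
  have hidem : IsIdempotentElem (s ∘ₗ f) := by
    rw [IsIdempotentElem, Module.End.mul_eq_comp, comp_assoc, ← comp_assoc f, hfs, id_comp]
  simpa only [range_comp_of_range_eq_top s hf, ker_comp_of_ker_eq_bot f hs] using hidem.isCompl

variable {Λ : Type u} [Ring Λ] {M : Type u} [AddCommGroup M] [Module Λ M]

theorem IsStableModule.subsingleton_of_surjective (hM : IsStableModule Λ M) {N : Type u}
    [AddCommGroup N] [Module Λ N] [Projective Λ N] {f : M →ₗ[Λ] N}
    (hf : Function.Surjective f) : Subsingleton N := by
  obtain ⟨s, hs⟩ := f.exists_rightInverse_of_surjective (range_eq_top_of_surjective f hf)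
  have hs_inj : Function.Injective s := ker_eq_bot.mp (ker_eq_bot_of_inverse hs)
  have hbot : range s = ⊥ := hM _ (.of_equiv (LinearEquiv.ofInjective s hs_inj))
    ⟨_, isCompl_range_ker_of_comp_eq_id hs⟩
  rw [range_eq_bot] at hbot
  subst hbot
  exact subsingleton_of_forall_eq 0 fun y ↦ by simpa using congr($hs y).symm

theorem IsStableModule.dual_eq_zero (hHered : ∀ I : Ideal Λ, Projective Λ I)
    (hM : IsStableModule Λ M) (φ : Dual Λ M) : φ = 0 := by
  -- `range φ : Submodule Λ Λ` is a left ideal of `Λ`.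
  have := hHered (range φ)
  rw [← range_eq_bot, ← Submodule.subsingleton_iff_eq_bot]
  exact hM.subsingleton_of_surjective φ.surjective_rangeRestrict

/-- Over a left hereditary ring, `M` is stable iff
`Hom_Λ(M, P) = 0` for every projective `P`. -/
theorem isStable_iff_hom_to_projective_zero
    (Λ : Type u) [Ring Λ]
    (hHered : ∀ I : Ideal Λ, Module.Projective Λ I)
    (M : Type u) [AddCommGroup M] [Module Λ M] :
    IsStableModule Λ M ↔
      ∀ (P : Type u) [AddCommGroup P] [Module Λ P], Module.Projective Λ P →
        ∀ f : M →ₗ[Λ] P, f = 0 := by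
  refine ⟨fun hM P _ _ _ f ↦ ?_, fun h p hp ⟨q, hpq⟩ ↦ ?_⟩
  · by_contra hf
    obtain ⟨g, hg⟩ := f.exists_dual_comp_ne_zero hf
    exact hg (hM.dual_eq_zero hHered _)
  · rw [← Submodule.range_projection hpq, Submodule.projection, h p hp (p.projectionOnto q hpq),
      comp_zero, range_zero]
end

section
/- Let Λ be a left hereditary ring and M a left Λ-module. Then M is costable if and only if Hom_Λ(I, M) = 0 for every injective left Λ-module I. -/
universe u

/-- A module is *costable* (i-reduced) if it has no nonzero injective direct summand. -/
def IsCostableModule (Λ : Type u) [Ring Λ] (M : Type u) [AddCommGroup M] [Module Λ M] : Prop :=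
  ∀ p : Submodule Λ M, Module.Injective Λ p → (∃ q, IsCompl p q) → p = ⊥

/-- Over a left hereditary ring, `M` is costable iff
`Hom_Λ(I, M) = 0` for every injective module `I`. -/
theorem isCostable_iff_hom_from_injective_zero
    (Λ : Type u) [Ring Λ]
    (hHered : ∀ I : Ideal Λ, Module.Projective Λ I)
    (M : Type u) [AddCommGroup M] [Module Λ M] :
    IsCostableModule Λ M ↔
      ∀ (I : Type u) [AddCommGroup I] [Module Λ I], Module.Injective Λ I →
        ∀ f : I →ₗ[Λ] M, f = 0 := by
  constructor
  · intro hM I _ _ hI f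
    -- the range of `f` is injective, being a quotient of `I` over a hereditary ring
    have hrange : Module.Injective Λ (LinearMap.range f) := by
      apply Module.Baer.injective
      intro J g
      -- lift `g` along the surjection `I → range f` using projectivity of `J`
      have : Module.Projective Λ J := hHered J
      obtain ⟨g', hg'⟩ := Module.projective_lifting_property f.rangeRestrict g
        (LinearMap.surjective_rangeRestrict f)
      -- extend `g'` along `J ↪ Λ` using injectivity of `I`
      obtain ⟨h, hh⟩ := hI.out J.subtype J.injective_subtype g'
      refine ⟨f.rangeRestrict ∘ₗ h, fun x hx => ?_⟩
      have := hh ⟨x, hx⟩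
      simp only [Submodule.subtype_apply] at this
      simp only [LinearMap.comp_apply, this]
      rw [← hg']
      rfl
    -- injective submodules split
    obtain ⟨r, hr⟩ := hrange.out (LinearMap.range f).subtype
      (LinearMap.range f).injective_subtype LinearMap.id
    have hcompl : ∃ q, IsCompl (LinearMap.range f) q :=
      ⟨LinearMap.ker r, LinearMap.isCompl_of_proj (fun x => by
        simpa using hr x)⟩
    have := hM (LinearMap.range f) hrange hcompl
    ext x
    have hx : f x ∈ LinearMap.range f := ⟨x, rfl⟩
    rw [this] at hx
    simpa using hx
  · intro h p hp hq
    have h0 := h p hp p.subtype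
    rw [eq_bot_iff]
    intro x hx
    have : p.subtype ⟨x, hx⟩ = 0 := by rw [h0]; rfl
    simpa using this
end

section
/- Let Λ be a left hereditary ring. The class of costable left Λ-modules is closed under direct products: if each M_i (i ∈ I) is costable, then ∏_{i∈I} M_i is costable. -/
universe u

/-- Over a left hereditary ring, any surjective image of an injective module is injective. -/
theorem injective_of_surjective_of_hereditary {Λ : Type u} [Ring Λ]
    (hHered : ∀ I : Ideal Λ, Module.Projective Λ I)
    {P Q : Type u} [AddCommGroup P] [Module Λ P] [AddCommGroup Q] [Module Λ Q]
    (hP : Module.Injective Λ P) (f : P →ₗ[Λ] Q) (hf : Function.Surjective f) :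
    Module.Injective Λ Q := by
  refine Module.Baer.injective (fun I g => ?_)
  have : Module.Projective Λ I := hHered I
  obtain ⟨h, hh⟩ := Module.projective_lifting_property f g hf
  obtain ⟨h', hh'⟩ := hP.out I.subtype Subtype.val_injective h
  refine ⟨f ∘ₗ h', fun x hx => ?_⟩
  have := hh' ⟨x, hx⟩
  simp only [Submodule.subtype_apply] at this
  rw [LinearMap.comp_apply, this, ← hh]
  rfl

/-- Over a left hereditary ring, a direct product of costable
modules is costable. -/
theorem isCostable_pi
    (Λ : Type u) [Ring Λ]
    (hHered : ∀ I : Ideal Λ, Module.Projective Λ I)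
    (ι : Type u) (M : ι → Type u)
    [∀ i, AddCommGroup (M i)] [∀ i, Module Λ (M i)]
    (hM : ∀ i, IsCostableModule Λ (M i)) :
    IsCostableModule Λ (∀ i, M i) := by
  intro p hp _compl
  rw [eq_bot_iff]
  intro x hx
  have key : ∀ i : ι, x i = 0 := by
    intro i
    -- projection of p into M i
    set π : p →ₗ[Λ] M i := (LinearMap.proj i).comp p.subtype with hπ
    set r : Submodule Λ (M i) := LinearMap.range π with hr
    -- r is injective as a surjective image of the injective module p
    have hrinj : Module.Injective Λ r :=
      injective_of_surjective_of_hereditary hHered hp π.rangeRestrict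
        π.surjective_rangeRestrict
    -- r is a direct summand: injective submodules split
    obtain ⟨ρ, hρ⟩ := hrinj.out r.subtype Subtype.val_injective LinearMap.id
    have hcompl : IsCompl r (LinearMap.ker ρ) :=
      LinearMap.isCompl_of_proj (fun y => hρ y)
    have hbot : r = ⊥ := hM i r hrinj ⟨LinearMap.ker ρ, hcompl⟩
    have hmem : π ⟨x, hx⟩ ∈ r := LinearMap.mem_range_self π ⟨x, hx⟩
    rw [hbot, Submodule.mem_bot] at hmem
    simpa [hπ] using hmem
  simp [Submodule.mem_bot]
  exact funext key
end

section
/- Let C be a complete category equipped with a factorization system (E, M) in which every morphism of E is an epimorphism, and suppose C is E-co-well-powered. Let X be a full replete subcategory of C that is closed under products and closed under M-subobjects (if m : A → B lies in M and B is in X, then A is in X). Then X is a reflective subcategory of C, and each reflection unit component lies in E. -/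
open CategoryTheory CategoryTheory.Limits

universe v u

/-- A factorization system `(E, M)` on a category `C`. -/
structure FactorizationSystem (C : Type u) [Category.{v} C] where
  E : MorphismProperty C
  M : MorphismProperty C
  E_of_iso : ∀ {X Y : C} (f : X ⟶ Y), IsIso f → E f
  M_of_iso : ∀ {X Y : C} (f : X ⟶ Y), IsIso f → M f
  E_comp : ∀ {X Y Z : C} (f : X ⟶ Y) (g : Y ⟶ Z), E f → E g → E (f ≫ g)
  M_comp : ∀ {X Y Z : C} (f : X ⟶ Y) (g : Y ⟶ Z), M f → M g → M (f ≫ g)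
  factor : ∀ {X Y : C} (f : X ⟶ Y),
    ∃ (Z : C) (e : X ⟶ Z) (m : Z ⟶ Y), E e ∧ M m ∧ e ≫ m = f
  diag : ∀ {A B X Y : C} (e : A ⟶ B) (m : X ⟶ Y) (f : A ⟶ X) (g : B ⟶ Y),
    E e → M m → e ≫ g = f ≫ m → ∃! d : B ⟶ X, e ≫ d = f ∧ d ≫ m = g

/-- (Generalized `old theorem'.) Let `C` be complete with a
factorization system `(E, M)`, `E ⊆ Epi`, and `C` `E`-co-well-powered. A full replete
subcategory closed under products and `M`-subobjects is reflective, with reflection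
units in `E`. -/
theorem reflective_of_closed_under_products_and_M_subobjects
    (C : Type u) [Category.{v} C] [HasLimits C]
    (F : FactorizationSystem C)
    (hE : ∀ {X Y : C} (f : X ⟶ Y), F.E f → Epi f)
    -- `E`-co-well-poweredness: each object has a set of representatives of
    -- `E`-quotients
    (cowell : ∀ A : C, ∃ (ι : Type v) (Z : ι → C) (e : ∀ i, A ⟶ Z i),
      (∀ i, F.E (e i)) ∧
        ∀ (Y : C) (f : A ⟶ Y), F.E f →
          ∃ (i : ι) (φ : Z i ⟶ Y), IsIso φ ∧ e i ≫ φ = f)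
    (P : C → Prop)
    (replete : ∀ {A B : C}, (A ≅ B) → P A → P B)
    (prodClosed : ∀ {ι : Type v} (f : ι → C), (∀ i, P (f i)) → P (∏ᶜ f))
    (subClosed : ∀ {A B : C} (m : A ⟶ B), F.M m → P B → P A) :
    ∀ A : C, ∃ (B : C) (η : A ⟶ B), P B ∧ F.E η ∧
      ∀ Y : C, P Y → ∀ f : A ⟶ Y, ∃! g : B ⟶ Y, η ≫ g = f := by

  intro A
  obtain ⟨ι, Z, e, hEe, huniv⟩ := cowell A
  let f : {i : ι // P (Z i)} → C := fun i => Z i.1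
  let p : A ⟶ ∏ᶜ f := Pi.lift fun i => e i.1
  obtain ⟨B, η, m, hη, hm, hfac⟩ := F.factor p
  refine ⟨B, η, subClosed m hm (prodClosed f fun i => i.2), hη, ?_⟩
  intro Y hY g0
  obtain ⟨W, ef, mf, hef, hmf, hf⟩ := F.factor g0
  have hPW : P W := subClosed mf hmf hY
  obtain ⟨i, φ, hφ, hcomm⟩ := huniv W ef hef
  haveI := hφ
  have hPi : P (Z i) := replete (asIso φ).symm hPW
  have key : η ≫ m ≫ Pi.π f ⟨i, hPi⟩ ≫ φ ≫ mf = g0 := by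
    have h2 : η ≫ m ≫ Pi.π f ⟨i, hPi⟩ = e i := by
      rw [← Category.assoc, hfac]; simp [p]
    rw [reassoc_of% h2, ← Category.assoc, hcomm, hf]
  refine ⟨m ≫ Pi.π f ⟨i, hPi⟩ ≫ φ ≫ mf, by simpa using key, ?_⟩
  intro g' hg'
  haveI : Epi η := hE η hη
  exact (cancel_epi η).mp (by rw [hg']; exact key.symm ▸ (by simp [key]))
end

section
/- Let C be a category with a factorization system (E, M) where E consists of epimorphisms, and let X be a reflective full replete subcategory of C whose reflection unit components all lie in E. Then X is closed under M-subobjects: if m : A → B is in M and B is an object of X, then A is an object of X. -/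
open CategoryTheory

universe v u

/-- A reflective full replete subcategory whose reflection units lie
in `E` is closed under `M`-subobjects. -/
theorem reflective_closed_under_M_subobjects
    (C : Type u) [Category.{v} C] (F : FactorizationSystem C)
    (hE : ∀ {X Y : C} (f : X ⟶ Y), F.E f → Epi f)
    (P : C → Prop)
    (replete : ∀ {A B : C}, (A ≅ B) → P A → P B)
    (r : C → C) (η : ∀ A : C, A ⟶ r A)
    (hrP : ∀ A : C, P (r A))
    (hηE : ∀ A : C, F.E (η A))
    (univ : ∀ (A Y : C), P Y → ∀ f : A ⟶ Y, ∃! g : r A ⟶ Y, η A ≫ g = f)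
    {A B : C} (m : A ⟶ B) (hm : F.M m) (hB : P B) :
    P A := by
  obtain ⟨g, hg, -⟩ := univ A B hB m
  obtain ⟨d, ⟨hd1, hd2⟩, -⟩ := F.diag (η A) m (𝟙 A) g (hηE A) hm (by simp [hg])
  have hepi : Epi (η A) := hE _ (hηE A)
  have : d ≫ η A = 𝟙 (r A) := by
    rw [← cancel_epi (η A), ← Category.assoc, hd1]; simp
  have : IsIso (η A) := ⟨d, hd1, this⟩
  exact replete (asIso (η A)).symm (hrP A)
end

section
/- Let Λ be a left hereditary ring such that every left Λ-module M decomposes as M ≅ S ⊕ P with S stable and P projective. Then the full subcategory of projective left Λ-modules is reflective in Λ-Mod: for every module M there exists a projective module r(M) and a Λ-linear map η : M → r(M) such that every Λ-linear map from M to a projective module factors through η. -/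
universe u

lemma stable_hom_to_ring_eq_zero (Λ : Type u) [Ring Λ]
    (hHered : ∀ I : Ideal Λ, Module.Projective Λ I)
    (S : Type u) [AddCommGroup S] [Module Λ S] (hS : IsStableModule Λ S)
    (φ : S →ₗ[Λ] Λ) : φ = 0 := by
  set I : Ideal Λ := LinearMap.range φ with hI
  haveI : Module.Projective Λ I := hHered I
  have hsurj : Function.Surjective φ.rangeRestrict := fun y => by
    obtain ⟨x, hx⟩ := y.2
    exact ⟨x, Subtype.ext hx⟩
  obtain ⟨σ, hσ⟩ := Module.projective_lifting_property φ.rangeRestrict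
      (LinearMap.id : I →ₗ[Λ] I) hsurj
  have hσ' : ∀ x : I, φ.rangeRestrict (σ x) = x := fun x =>
    congrArg (fun g => g x) hσ
  have hinj : Function.Injective σ := by
    intro a b hab
    have := congrArg φ.rangeRestrict hab
    rwa [hσ', hσ'] at this
  have hcompl : IsCompl (LinearMap.range σ) (LinearMap.ker φ.rangeRestrict) := by
    constructor
    · rw [disjoint_iff_inf_le]
      rintro x ⟨⟨a, rfl⟩, (hx2 : φ.rangeRestrict (σ a) = 0)⟩
      rw [hσ'] at hx2
      simp [hx2]
    · rw [codisjoint_iff_le_sup]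
      intro x _
      have : x - σ (φ.rangeRestrict x) ∈ LinearMap.ker φ.rangeRestrict := by
        rw [LinearMap.mem_ker, map_sub, hσ', sub_self]
      have hmem := Submodule.add_mem_sup
        (LinearMap.mem_range_self σ (φ.rangeRestrict x)) this
      rwa [add_sub_cancel] at hmem
  have hproj : Module.Projective Λ (LinearMap.range σ) :=
    Module.Projective.of_equiv (LinearEquiv.ofInjective σ hinj)
  have hbot : LinearMap.range σ = ⊥ := hS _ hproj ⟨_, hcompl⟩
  have hσ0 : ∀ x : I, σ x = 0 := fun x => by
    have : σ x ∈ (⊥ : Submodule Λ S) := hbot ▸ LinearMap.mem_range_self σ x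
    simpa using this
  ext x
  have : (⟨φ x, LinearMap.mem_range_self φ x⟩ : I) = 0 := by
    have := hσ' ⟨φ x, LinearMap.mem_range_self φ x⟩
    rw [hσ0, map_zero] at this
    exact this.symm
  simpa using congrArg Subtype.val this

lemma stable_hom_to_projective_eq_zero (Λ : Type u) [Ring Λ]
    (hHered : ∀ I : Ideal Λ, Module.Projective Λ I)
    (S : Type u) [AddCommGroup S] [Module Λ S] (hS : IsStableModule Λ S)
    (Q : Type u) [AddCommGroup Q] [Module Λ Q] (hQ : Module.Projective Λ Q)
    (h : S →ₗ[Λ] Q) : h = 0 := by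
  obtain ⟨s, hs⟩ := Module.projective_def.mp hQ
  ext x
  have hcoord : ∀ q : Q, (Finsupp.lapply q : (Q →₀ Λ) →ₗ[Λ] Λ).comp (s.comp h) = 0 :=
    fun q => stable_hom_to_ring_eq_zero Λ hHered S hS _
  have hzero : s (h x) = 0 := by
    ext q
    have := congrArg (fun g : S →ₗ[Λ] Λ => g x) (hcoord q)
    simpa using this
  have := hs (h x)
  rw [hzero, map_zero] at this
  simp [this.symm]

/-- If `Λ` is left hereditary and every module is the direct sum of
a stable module and a projective module, then the projective modules form a reflective
subcategory of `Λ-Mod`. -/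
theorem projectives_reflective_of_stable_projective_decomposition
    (Λ : Type u) [Ring Λ]
    (hHered : ∀ I : Ideal Λ, Module.Projective Λ I)
    (hDecomp : ∀ (M : Type u) [AddCommGroup M] [Module Λ M],
      ∃ (S P : Submodule Λ M), IsCompl S P ∧ IsStableModule Λ S ∧ Module.Projective Λ P) :
    ∀ (M : Type u) [AddCommGroup M] [Module Λ M],
      ∃ (R : Type u) (_ : AddCommGroup R) (_ : Module Λ R),
        Module.Projective Λ R ∧
          ∃ η : M →ₗ[Λ] R,
            ∀ (Q : Type u) [AddCommGroup Q] [Module Λ Q], Module.Projective Λ Q →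
              ∀ f : M →ₗ[Λ] Q, ∃! g : R →ₗ[Λ] Q, g.comp η = f := by
  intro M _ _
  obtain ⟨S, P, hcompl, hstable, hproj⟩ := hDecomp M
  refine ⟨P, inferInstance, inferInstance, hproj, ?_⟩
  set η : M →ₗ[Λ] P := Submodule.linearProjOfIsCompl P S hcompl.symm with hη
  have hηP : ∀ x : P, η x = x := Submodule.linearProjOfIsCompl_apply_left hcompl.symm
  have hηsurj : Function.Surjective η := fun p => ⟨p, hηP p⟩
  have hsub : ∀ x : M, x - ↑(η x) ∈ S := by
    intro x
    have h2 : (x : M) - ↑(η x) = ↑(Submodule.linearProjOfIsCompl S P hcompl x) := by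
      have h3 := Submodule.projection_add_projection_eq_self hcompl x
      exact (eq_sub_of_add_eq h3).symm
    rw [h2]; exact (Submodule.linearProjOfIsCompl S P hcompl x).2
  refine ⟨η, ?_⟩
  intro Q _ _ hQ f
  refine ⟨f.comp P.subtype, ?_, ?_⟩
  · ext x
    have hfS : f.comp S.subtype = 0 :=
      stable_hom_to_projective_eq_zero Λ hHered S hstable Q hQ (f.comp S.subtype)
    have : f (x - ↑(η x)) = 0 := by
      have := congrArg (fun g : S →ₗ[Λ] Q => g ⟨x - ↑(η x), hsub x⟩) hfS
      simpa using this
    simp only [LinearMap.comp_apply, Submodule.coe_subtype]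
    rw [map_sub] at this
    exact sub_eq_zero.mp this |>.symm
  · intro g hg
    subst hg
    ext p
    simp only [LinearMap.comp_apply, Submodule.coe_subtype]
    rw [hηP]
end

section
/- Let Λ be a left hereditary ring such that every left Λ-module decomposes as the direct sum of a stable module and a projective module. Then such decompositions are unique up to isomorphism: if M ≅ S ⊕ P ≅ S' ⊕ P' with S, S' stable and P, P' projective, then there is an isomorphism S ≅ S' compatible with the canonical embeddings and an isomorphism P ≅ P' compatible with the canonical projections. -/
/-!
A map from a stable module `N` onto a projective module splits, exhibiting a projective direct
summand of `N`; hence it vanishes. Over a left hereditary ring every map `N → Λ` has projective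
image (a left ideal), so it vanishes, and embedding a projective module into a free one shows that
`N` has no nonzero maps to any projective module. Consequently a stable summand `S` is killed by
the projection onto any projective complement `P'` of `S'`, i.e. `S ≤ S'`; by symmetry `S = S'`,
and then `P ≅ M ⧸ S ≅ P'` through the two projections.
-/

universe u

namespace IsStableModule

variable {Λ : Type u} [Ring Λ] {N : Type u} [AddCommGroup N] [Module Λ N]

theorem linearMap_eq_zero_of_projective_range (hN : IsStableModule Λ N) {Q : Type*}
    [AddCommGroup Q] [Module Λ Q] (f : N →ₗ[Λ] Q) [Module.Projective Λ (LinearMap.range f)] :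
    f = 0 := by
  obtain ⟨g, hg⟩ := Module.projective_lifting_property f.rangeRestrict LinearMap.id
    f.surjective_rangeRestrict
  have hsection : ∀ y, f.rangeRestrict (g y) = y := LinearMap.congr_fun hg
  have hg_inj : Function.Injective g := Function.LeftInverse.injective hsection
  have hproj : ∀ x : LinearMap.range g, (g.rangeRestrict ∘ₗ f.rangeRestrict) x = x := by
    rintro ⟨_, y, rfl⟩
    exact Subtype.ext congr(g $(hsection y))
  have hg0 : g = 0 := LinearMap.range_eq_bot.mp <|
    hN _ (.of_equiv (LinearEquiv.ofInjective g hg_inj)) ⟨_, LinearMap.isCompl_of_proj hproj⟩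
  ext x
  simpa [hg0] using congr(Subtype.val ($(hsection ⟨f x, x, rfl⟩))).symm

theorem linearMap_eq_zero_of_projective (hHered : ∀ I : Ideal Λ, Module.Projective Λ I)
    (hN : IsStableModule Λ N) {Q : Type*} [AddCommGroup Q] [Module Λ Q] [Module.Projective Λ Q]
    (f : N →ₗ[Λ] Q) : f = 0 := by
  obtain ⟨s, hs⟩ := Module.projective_def.mp ‹Module.Projective Λ Q›
  have hsf : s ∘ₗ f = 0 := LinearMap.ext fun x => Finsupp.ext fun a => by
    let fa := Finsupp.lapply a ∘ₗ s ∘ₗ f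
    have := hHered (LinearMap.range fa)
    exact LinearMap.congr_fun (hN.linearMap_eq_zero_of_projective_range fa) x
  ext x
  rw [← hs (f x), ← LinearMap.comp_apply s f, hsf]
  simp

theorem le_of_isCompl_of_projective (hHered : ∀ I : Ideal Λ, Module.Projective Λ I)
    {M : Type u} [AddCommGroup M] [Module Λ M]
    {A C D : Submodule Λ M} (hA : IsStableModule Λ A) (hCD : IsCompl C D)
    [Module.Projective Λ D] : A ≤ C := fun x hx => by
  have hx0 := LinearMap.congr_fun (hA.linearMap_eq_zero_of_projective hHered
    (D.projectionOnto C hCD.symm ∘ₗ A.subtype)) ⟨x, hx⟩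
  exact (Submodule.projectionOnto_apply_eq_zero_iff hCD.symm).mp hx0

end IsStableModule

theorem Submodule.exists_linearEquiv_comp_projectionOnto {R E : Type*} [Ring R]
    [AddCommGroup E] [Module R E] {p q q' : Submodule R E} (h : IsCompl p q) (h' : IsCompl p q') :
    ∃ e : q ≃ₗ[R] q', ∀ x, e (q.projectionOnto p h.symm x) = q'.projectionOnto p h'.symm x := by
  refine ⟨(p.quotientEquivOfIsCompl q h).symm ≪≫ₗ p.quotientEquivOfIsCompl q' h', fun x => ?_⟩
  rw [LinearEquiv.trans_apply, ← quotientEquivOfIsCompl_apply_mk h, LinearEquiv.symm_apply_apply,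
    quotientEquivOfIsCompl_apply_mk]

theorem stable_projective_decomposition_unique_general
    (Λ : Type u) [Ring Λ]
    (hHered : ∀ I : Ideal Λ, Module.Projective Λ I)
    (M : Type u) [AddCommGroup M] [Module Λ M]
    (S P S' P' : Submodule Λ M)
    (hc : IsCompl S P) (hc' : IsCompl S' P')
    (hS : IsStableModule Λ S) (hS' : IsStableModule Λ S')
    (hP : Module.Projective Λ P) (hP' : Module.Projective Λ P') :
    (∃ e : S ≃ₗ[Λ] S', ∀ x : S, (e x : M) = (x : M)) ∧
      (∃ e : P ≃ₗ[Λ] P', ∀ x : M,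
        e (Submodule.linearProjOfIsCompl P S hc.symm x)
          = Submodule.linearProjOfIsCompl P' S' hc'.symm x) := by
  obtain rfl : S = S' := le_antisymm (hS.le_of_isCompl_of_projective hHered hc')
    (hS'.le_of_isCompl_of_projective hHered hc)
  exact ⟨⟨LinearEquiv.refl Λ S, fun _ => rfl⟩,
    Submodule.exists_linearEquiv_comp_projectionOnto hc hc'⟩

/-- Over a left hereditary ring over which every module decomposes
as stable ⊕ projective, such decompositions are unique up to isomorphisms compatible
with the canonical embeddings and projections. -/
theorem stable_projective_decomposition_unique
    (Λ : Type u) [Ring Λ]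
    (hHered : ∀ I : Ideal Λ, Module.Projective Λ I)
    (hDecomp : ∀ (N : Type u) [AddCommGroup N] [Module Λ N],
      ∃ (S P : Submodule Λ N), IsCompl S P ∧ IsStableModule Λ S ∧ Module.Projective Λ P)
    (M : Type u) [AddCommGroup M] [Module Λ M]
    (S P S' P' : Submodule Λ M)
    (hc : IsCompl S P) (hc' : IsCompl S' P')
    (hS : IsStableModule Λ S) (hS' : IsStableModule Λ S')
    (hP : Module.Projective Λ P) (hP' : Module.Projective Λ P') :
    (∃ e : S ≃ₗ[Λ] S', ∀ x : S, (e x : M) = (x : M)) ∧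
      (∃ e : P ≃ₗ[Λ] P', ∀ x : M,
        e (Submodule.linearProjOfIsCompl P S hc.symm x)
          = Submodule.linearProjOfIsCompl P' S' hc'.symm x) :=
  stable_projective_decomposition_unique_general Λ hHered M S P S' P' hc hc' hS hS' hP hP'
end

section
/- Let Λ be a left hereditary ring in which every left Λ-module decomposes as the direct sum of an injective module and a costable module. Then for every left Λ-module M there is a largest injective submodule of M, i.e., an injective submodule containing every injective submodule of M. -/
/-! Write `M = I ⊕ C` with `I` injective and `C` costable. For an injective submodule `N'` of `M`,
the projection of `N'` to `C` is injective because `Λ` is hereditary, hence a direct summand of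
`C`, hence zero since `C` is costable. So `N' ≤ I`. -/

universe u v

open LinearMap Submodule

theorem Module.Injective.exists_isCompl {R : Type u} [Ring R] {M : Type v} [AddCommGroup M]
    [Module R M] {p : Submodule R M} (hp : Module.Injective R p) : ∃ q, IsCompl p q := by
  obtain ⟨r, hr⟩ := hp.out p.subtype p.injective_subtype LinearMap.id
  exact ⟨ker r, isCompl_of_proj hr⟩

theorem Module.Injective.of_surjective_of_hereditary {Λ : Type u} [Ring Λ]
    (hHered : ∀ I : Ideal Λ, Module.Projective Λ I) {Q Q' : Type u} [AddCommGroup Q]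
    [Module Λ Q] [AddCommGroup Q'] [Module Λ Q'] (hQ : Module.Injective Λ Q) (f : Q →ₗ[Λ] Q')
    (hf : Function.Surjective f) : Module.Injective Λ Q' := by
  refine Module.Baer.injective fun I g => ?_
  have := hHered I
  obtain ⟨g', hg'⟩ := Module.projective_lifting_property f g hf
  obtain ⟨h, hh⟩ := hQ.out I.subtype I.injective_subtype g'
  exact ⟨f ∘ₗ h, fun x hx => by
    rw [← hg']; exact congrArg f (hh ⟨x, hx⟩)⟩

theorem IsCostableModule.linearMap_eq_zero_of_injective {Λ : Type u} [Ring Λ]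
    (hHered : ∀ I : Ideal Λ, Module.Projective Λ I) {C Q : Type u} [AddCommGroup C]
    [Module Λ C] [AddCommGroup Q] [Module Λ Q] (hC : IsCostableModule Λ C)
    (hQ : Module.Injective Λ Q) (f : Q →ₗ[Λ] C) : f = 0 := by
  have hrange : Module.Injective Λ (range f) :=
    hQ.of_surjective_of_hereditary hHered f.rangeRestrict f.surjective_rangeRestrict
  exact range_eq_bot.1 (hC _ hrange hrange.exists_isCompl)

/-- If `Λ` is left hereditary and every module is the direct sum of
an injective module and a costable module, then every module has a largest injective
submodule. -/
theorem largest_injective_submodule_exists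
    (Λ : Type u) [Ring Λ]
    (hHered : ∀ I : Ideal Λ, Module.Projective Λ I)
    (hDecomp : ∀ (N : Type u) [AddCommGroup N] [Module Λ N],
      ∃ (I C : Submodule Λ N), IsCompl I C ∧ Module.Injective Λ I ∧ IsCostableModule Λ C) :
    ∀ (M : Type u) [AddCommGroup M] [Module Λ M],
      ∃ N : Submodule Λ M, Module.Injective Λ N ∧
        ∀ N' : Submodule Λ M, Module.Injective Λ N' → N' ≤ N := by
  intro M _ _
  obtain ⟨I, C, hIC, hI, hC⟩ := hDecomp M
  refine ⟨I, hI, fun N' hN' x hx => ?_⟩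
  have hzero := hC.linearMap_eq_zero_of_injective hHered hN'
    (C.projectionOnto I hIC.symm ∘ₗ N'.subtype)
  exact (projectionOnto_apply_eq_zero_iff hIC.symm).1 (LinearMap.congr_fun hzero ⟨x, hx⟩)
end
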